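/- arXiv:2208.13919 — 2 statements merged into one kernel-verified Lean document; each statement's English description precedes it below -/
import Mathlib

section
/- (Poisson cgf bound) Let ξ : ℝ → ℝ be differentiable with ξ(0) = 0. If for constants a > 0, v ≥ 0 one has ξ'(θ) ≤ a·ξ(θ) + v·θ for all θ > 0, then ξ(θ) ≤ v·(e^{aθ} − aθ − 1)/a² for all θ ≥ 0. -/
/-!
The bound `g θ = v (e^{aθ} − aθ − 1)/a²` solves `g' = a g + vθ`, `g 0 = 0`, so `h = ξ − g`
satisfies `h' ≤ a h` on `θ > 0` with `h 0 = 0`. Multiplying by the integrating factor `e^{−aθ}`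
makes `h e^{−aθ}` antitone on `[0, ∞)`, hence `h ≤ 0` there.
-/

open Real Set

theorem antitoneOn_mul_exp_neg_of_deriv_le {f : ℝ → ℝ} {a x₀ : ℝ} (hf : ContinuousOn f (Ici x₀))
    (hf' : DifferentiableOn ℝ f (Ioi x₀)) (h : ∀ x > x₀, deriv f x ≤ a * f x) :
    AntitoneOn (fun x => f x * exp (-(a * x))) (Ici x₀) := by
  apply antitoneOn_of_deriv_nonpos (convex_Ici x₀) (hf.mul (by fun_prop))
  · rw [interior_Ici]
    exact hf'.mul (by fun_prop)
  · intro x hx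
    rw [interior_Ici] at hx
    have hfx : HasDerivAt f (deriv f x) x :=
      (hf'.differentiableAt (Ioi_mem_nhds hx)).hasDerivAt
    have hexp : HasDerivAt (fun x => exp (-(a * x))) (exp (-(a * x)) * -a) x :=
      (((hasDerivAt_id x).const_mul a).neg).exp.congr_deriv (by simp)
    rw [(hfx.mul hexp).deriv]
    have hmul : deriv f x * exp (-(a * x)) ≤ a * f x * exp (-(a * x)) :=
      mul_le_mul_of_nonneg_right (h x hx) (exp_pos _).le
    linarith

theorem le_mul_exp_of_deriv_le {f : ℝ → ℝ} {a x₀ : ℝ} (hf : ContinuousOn f (Ici x₀))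
    (hf' : DifferentiableOn ℝ f (Ioi x₀)) (h : ∀ x > x₀, deriv f x ≤ a * f x) {x : ℝ}
    (hx : x₀ ≤ x) : f x ≤ f x₀ * exp (a * (x - x₀)) := by
  have hanti := antitoneOn_mul_exp_neg_of_deriv_le hf hf' h self_mem_Ici hx hx
  calc f x = f x * exp (-(a * x)) * exp (a * x) := by
        rw [mul_assoc, ← exp_add, neg_add_cancel, exp_zero, mul_one]
    _ ≤ f x₀ * exp (-(a * x₀)) * exp (a * x) :=
        mul_le_mul_of_nonneg_right hanti (exp_pos _).le
    _ = f x₀ * exp (a * (x - x₀)) := by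
        rw [mul_assoc, ← exp_add]
        ring_nf

theorem hasDerivAt_poisson_bound {a : ℝ} (ha : a ≠ 0) (v x : ℝ) :
    HasDerivAt (fun θ => v * (exp (a * θ) - a * θ - 1) / a ^ 2)
      (a * (v * (exp (a * x) - a * x - 1) / a ^ 2) + v * x) x := by
  have hlin : HasDerivAt (fun θ => a * θ) a x := by
    simpa using (hasDerivAt_id x).const_mul a
  refine ((((hlin.exp.sub hlin).sub_const 1).const_mul v).div_const (a ^ 2)).congr_deriv ?_
  field_simp
  ring

theorem poisson_cgf_bound_general (ξ : ℝ → ℝ) (hξ : Differentiable ℝ ξ) (h0 : ξ 0 = 0)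
    (a v : ℝ) (ha : 0 < a)
    (hineq : ∀ θ : ℝ, 0 < θ → deriv ξ θ ≤ a * ξ θ + v * θ) :
    ∀ θ : ℝ, 0 ≤ θ → ξ θ ≤ v * (Real.exp (a * θ) - a * θ - 1) / a ^ 2 := by
  intro θ hθ
  set g : ℝ → ℝ := fun θ => v * (exp (a * θ) - a * θ - 1) / a ^ 2
  have hg : ∀ x, HasDerivAt g (a * g x + v * x) x := hasDerivAt_poisson_bound ha.ne' v
  have hgap : ∀ x > 0, deriv (ξ - g) x ≤ a * (ξ - g) x := by
    intro x hx
    rw [((hξ x).hasDerivAt.sub (hg x)).deriv, Pi.sub_apply]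
    linarith [hineq x hx]
  have hdiff : Differentiable ℝ (ξ - g) := hξ.sub fun x => (hg x).differentiableAt
  have hgap0 : (ξ - g) 0 = 0 := by simp [g, h0]
  have hle := le_mul_exp_of_deriv_le hdiff.continuous.continuousOn hdiff.differentiableOn hgap hθ
  rwa [hgap0, zero_mul, Pi.sub_apply, sub_nonpos] at hle

/-- Poisson cgf bound: if `ξ` is differentiable with `ξ 0 = 0` and satisfies the
differential inequality `ξ'(θ) ≤ a ξ(θ) + v θ` on `θ > 0` (with `a > 0`, `v ≥ 0`),
then `ξ(θ) ≤ v (e^{aθ} − aθ − 1)/a²` for all `θ ≥ 0`. -/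
theorem poisson_cgf_bound (ξ : ℝ → ℝ) (hξ : Differentiable ℝ ξ) (h0 : ξ 0 = 0)
    (a v : ℝ) (ha : 0 < a) (hv : 0 ≤ v)
    (hineq : ∀ θ : ℝ, 0 < θ → deriv ξ θ ≤ a * ξ θ + v * θ) :
    ∀ θ : ℝ, 0 ≤ θ → ξ θ ≤ v * (Real.exp (a * θ) - a * θ - 1) / a ^ 2 :=
  poisson_cgf_bound_general ξ hξ h0 a v ha hineq
end

section
/- Let ξ be a twice differentiable function with ξ(0)=0, ξ' increasing and ξ' nonnegative, satisfying ξ''(θ) ≤ (2/(n+1))·ξ'(θ)·((n+1) − ξ'(θ)) for all θ, and let δ := ξ'(0). Setting η(θ) := ξ(θ) − δθ, one has η'(θ) ≤ β₀ η(θ) + v̄ θ for all θ > 0, where β₀ = 2((n+1) − δ)/(n+1) and v̄ = 2δ((n+1) − δ)/(n+1). -/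
/-- From the thermal-variance bound
`ξ''(θ) ≤ (2/(n+1)) ξ'(θ) ((n+1) − ξ'(θ))` for a convex twice differentiable `ξ`
with `ξ 0 = 0`, `ξ' ≥ 0` and `δ = ξ'(0) ∈ [0, n+1]`, the centered function
`η(θ) = ξ(θ) − δθ` satisfies the differential inequality
`η'(θ) ≤ β₀ η(θ) + v̄ θ` for `θ > 0`, where `β₀ = 2((n+1) − δ)/(n+1)` and
`v̄ = 2δ((n+1) − δ)/(n+1)`. -/
theorem centered_cgf_differential_inequality (n : ℕ) (hn : 0 < n)
    (ξ : ℝ → ℝ) (hd1 : Differentiable ℝ ξ) (hd2 : Differentiable ℝ (deriv ξ))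
    (hconv : ConvexOn ℝ Set.univ ξ) (h0 : ξ 0 = 0)
    (hpos : ∀ θ : ℝ, 0 ≤ deriv ξ θ)
    (δ : ℝ) (hδ : δ = deriv ξ 0) (hδ0 : 0 ≤ δ) (hδn : δ ≤ (n : ℝ) + 1)
    (hvar : ∀ θ : ℝ, deriv (deriv ξ) θ ≤
      (2 / ((n : ℝ) + 1)) * deriv ξ θ * (((n : ℝ) + 1) - deriv ξ θ)) :
    ∀ θ : ℝ, 0 < θ →
      deriv (fun s => ξ s - δ * s) θ ≤
        (2 * (((n : ℝ) + 1) - δ) / ((n : ℝ) + 1)) * (ξ θ - δ * θ) +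
          (2 * δ * (((n : ℝ) + 1) - δ) / ((n : ℝ) + 1)) * θ := by
  intro θ hθ
  set N : ℝ := (n : ℝ) + 1 with hN
  have hNpos : (0 : ℝ) < N := by positivity
  set c : ℝ := 2 * (N - δ) / N with hc
  -- derivative of the centered function
  have hder : deriv (fun s => ξ s - δ * s) θ = deriv ξ θ - δ := by
    have : HasDerivAt (fun s => ξ s - δ * s) (deriv ξ θ - δ * 1) θ :=
      ((hd1 θ).hasDerivAt).sub ((hasDerivAt_id θ).const_mul δ)
    simpa using this.deriv
  rw [hder]
  -- ξ' is monotone (from convexity), hence ξ' s ≥ δ for s ≥ 0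
  have hmono : MonotoneOn (deriv ξ) Set.univ :=
    hconv.monotoneOn_deriv (fun x _ => hd1 x)
  have hge : ∀ s : ℝ, 0 ≤ s → δ ≤ deriv ξ s := fun s hs => by
    rw [hδ]; exact hmono (Set.mem_univ 0) (Set.mem_univ s) hs
  -- auxiliary function g
  set g : ℝ → ℝ := fun s => c * ξ s - deriv ξ s with hg
  have hgdiff : Differentiable ℝ g := (hd1.const_mul c).sub hd2
  have hgderiv : ∀ s : ℝ, deriv g s = c * deriv ξ s - deriv (deriv ξ) s := by
    intro s
    have : HasDerivAt g (c * deriv ξ s - deriv (deriv ξ) s) s :=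
      (((hd1 s).hasDerivAt).const_mul c).sub ((hd2 s).hasDerivAt)
    exact this.deriv
  have hkey : ∀ s ∈ interior (Set.Ici (0:ℝ)), 0 ≤ deriv g s := by
    intro s hs
    rw [interior_Ici] at hs
    have hs0 : (0:ℝ) ≤ s := le_of_lt hs
    rw [hgderiv]
    have h1 := hvar s
    have h2 := hge s hs0
    have h3 := hpos s
    rw [hc]
    rw [div_mul_eq_mul_div, sub_nonneg, le_div_iff₀ hNpos]
    have h1' : deriv (deriv ξ) s * N ≤ 2 * deriv ξ s * (N - deriv ξ s) := by
      have := mul_le_mul_of_nonneg_right h1 (le_of_lt hNpos)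
      calc deriv (deriv ξ) s * N ≤ 2 / N * deriv ξ s * (N - deriv ξ s) * N := this
        _ = 2 * deriv ξ s * (N - deriv ξ s) := by field_simp
    nlinarith [mul_le_mul_of_nonneg_left h2 (by linarith : (0:ℝ) ≤ 2 * deriv ξ s)]
  have hgmono : MonotoneOn g (Set.Ici (0:ℝ)) :=
    monotoneOn_of_deriv_nonneg (convex_Ici 0) hgdiff.continuous.continuousOn
      (hgdiff.differentiableOn) hkey
  have := hgmono (Set.mem_Ici.2 le_rfl) (Set.mem_Ici.2 hθ.le) hθ.le
  simp only [hg] at this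
  rw [h0, ← hδ] at this
  -- goal: deriv ξ θ - δ ≤ c * (ξ θ - δθ) + (cδ) θ  which equals c * ξ θ
  have hrhs : c * (ξ θ - δ * θ) + 2 * δ * (N - δ) / N * θ = c * ξ θ := by
    rw [hc]; field_simp; ring
  rw [hrhs]
  linarith [this]
end
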